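/- arXiv:2310.17248 — 5 statements merged into one kernel-verified Lean document; each statement's English description precedes it below -/
import Mathlib

section
/- (Fisher's identity, equation (2), for the PET model.) Let λ0 be admissible. For every b ∈ B, the partial derivative of Q(·, λ0) with respect to the coordinate λ b, evaluated at λ = λ0, equals the partial derivative of the incomplete-data log-likelihood ℓ with respect to λ b at λ0; both equal −1 + ∑_{d ∈ D} n d * p b d / g λ0 d. -/
open scoped BigOperators

/-- Forward projection: `g p lam d = ∑ b, p b d * lam b`. -/
noncomputable def g {B D : Type*} [Fintype B] (p : B → D → ℝ) (lam : B → ℝ) (d : D) : ℝ :=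
  ∑ b, p b d * lam b

/-- Incomplete-data log-likelihood `ℓ lam = ∑ d, (n d * log (g lam d) - g lam d)`. -/
noncomputable def logLik {B D : Type*} [Fintype B] [Fintype D]
    (p : B → D → ℝ) (n : D → ℝ) (lam : B → ℝ) : ℝ :=
  ∑ d, (n d * Real.log (g p lam d) - g p lam d)

/-- Observed Fisher information `I lam b₁ b₂ = ∑ d, (n d / (g lam d)^2) * p b₁ d * p b₂ d`. -/
noncomputable def fisherI {B D : Type*} [Fintype B] [Fintype D]
    (p : B → D → ℝ) (n : D → ℝ) (lam : B → ℝ) (b₁ b₂ : B) : ℝ :=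
  ∑ d, (n d / (g p lam d) ^ 2) * p b₁ d * p b₂ d

/-- EM surrogate `Q lam lam0` (with Lean's convention `Real.log 0 = 0`). -/
noncomputable def Qsur {B D : Type*} [Fintype B] [Fintype D]
    (p : B → D → ℝ) (n : D → ℝ) (lam lam0 : B → ℝ) : ℝ :=
  ∑ d, n d * ∑ b, (p b d * lam0 b / g p lam0 d) * Real.log (lam b * p b d) - ∑ b, lam b

/-- The Shepp–Vardi EM update `T lam b = lam b * ∑ d, n d * p b d / g lam d`. -/
noncomputable def emT {B D : Type*} [Fintype B] [Fintype D]
    (p : B → D → ℝ) (n : D → ℝ) (lam : B → ℝ) (b : B) : ℝ :=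
  lam b * ∑ d, n d * p b d / g p lam d

/-- `lam` is admissible: positive charges, and positive projection wherever a count was observed. -/
def Admissible {B D : Type*} [Fintype B] [Fintype D]
    (p : B → D → ℝ) (n : D → ℝ) (lam : B → ℝ) : Prop :=
  (∀ b, lam b > 0) ∧ ∀ d, n d > 0 → g p lam d > 0

/-! Only the summands indexed by `b` depend on `λ b`. In `Q(·, λ0)` they are
`w * log (λ b * p b d)` with posterior weight `w = p b d * λ0 b / g λ0 d`, of derivative
`w / λ b`, which is `p b d / g λ0 d` at `λ = λ0`. In `ℓ`, `g λ d` is affine in `λ b` with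
slope `p b d`, and `∑ d, p b d = 1` turns the derivative of `-∑ d, g λ d` into `-1`. -/

open Finset Function

section UpdateDerivatives

variable {B : Type*} [Fintype B] [DecidableEq B]

theorem hasDerivAt_sum_apply_update (F : B → ℝ → ℝ) (lam : B → ℝ) (b : B) {F' t : ℝ}
    (hF : HasDerivAt (F b) F' t) :
    HasDerivAt (fun s => ∑ b', F b' (update lam b s b')) F' t := by
  simp_rw [apply_update F lam b, sum_update_of_mem (mem_univ b)]
  exact hF.add_const _

theorem hasDerivAt_mul_log_mul_right {a c t : ℝ} (ht : t ≠ 0) (hc : a = 0 → c = 0) :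
    HasDerivAt (fun s => c * Real.log (s * a)) (c / t) t := by
  by_cases ha : a = 0
  · simpa [ha, hc ha] using hasDerivAt_const t (0 : ℝ)
  · have hlog := ((hasDerivAt_mul_const a).log (mul_ne_zero ht ha)).const_mul c
    rwa [div_mul_cancel_right₀ ha, ← div_eq_mul_inv] at hlog

theorem hasDerivAt_g_update {D : Type*} (p : B → D → ℝ) (lam : B → ℝ) (b : B) (d : D)
    (t : ℝ) :
    HasDerivAt (fun s => g p (update lam b s) d) (p b d) t :=
  hasDerivAt_sum_apply_update (fun b' x => p b' d * x) lam b (hasDerivAt_const_mul _)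

variable {D : Type*} [Fintype D]

theorem hasDerivAt_Qsur_update (p : B → D → ℝ) (n : D → ℝ) (lam lam0 : B → ℝ) (b : B)
    {t : ℝ} (ht : t ≠ 0) :
    HasDerivAt (fun s => Qsur p n (update lam b s) lam0)
      (∑ d, n d * (p b d * lam0 b / g p lam0 d / t) - 1) t := by
  have hlogs : ∀ d ∈ univ, HasDerivAt
      (fun s => n d * ∑ b', p b' d * lam0 b' / g p lam0 d * Real.log (update lam b s b' * p b' d))
      (n d * (p b d * lam0 b / g p lam0 d / t)) t := fun d _ =>
    (hasDerivAt_sum_apply_update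
      (fun b' x => p b' d * lam0 b' / g p lam0 d * Real.log (x * p b' d)) lam b
      (hasDerivAt_mul_log_mul_right ht fun hp => by simp [hp])).const_mul (n d)
  exact (HasDerivAt.fun_sum hlogs).sub
    (hasDerivAt_sum_apply_update (fun _ x => x) lam b (hasDerivAt_id t))

theorem hasDerivAt_logLik_update (p : B → D → ℝ) (n : D → ℝ) (lam : B → ℝ) (b : B)
    (hg : ∀ d, n d ≠ 0 → g p lam d ≠ 0) :
    HasDerivAt (fun s => logLik p n (update lam b s))
      (∑ d, (n d * p b d / g p lam d - p b d)) (lam b) := by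
  refine HasDerivAt.fun_sum fun d _ => ?_
  have hgd := hasDerivAt_g_update p lam b d (lam b)
  by_cases hn : n d = 0
  · simpa [hn] using hgd.fun_neg
  · have hlog := hgd.log (by rw [update_eq_self]; exact hg d hn)
    rw [update_eq_self] at hlog
    simpa only [mul_div_assoc] using (hlog.const_mul (n d)).fun_sub hgd

end UpdateDerivatives

theorem fisher_identity_general {B D : Type*} [Fintype B] [Fintype D]
    (p : B → D → ℝ) (hpsum : ∀ b, ∑ d, p b d = 1)
    (n : D → ℝ) (hn : ∀ d, 0 ≤ n d) [DecidableEq B]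
    (lam0 : B → ℝ) (hlam0 : Admissible p n lam0) (b : B) :
    HasDerivAt (fun t : ℝ => Qsur p n (Function.update lam0 b t) lam0)
      (-1 + ∑ d, n d * p b d / g p lam0 d) (lam0 b) ∧
    HasDerivAt (fun t : ℝ => logLik p n (Function.update lam0 b t))
      (-1 + ∑ d, n d * p b d / g p lam0 d) (lam0 b) := by
  obtain ⟨hpos, hgpos⟩ := hlam0
  have hg : ∀ d, n d ≠ 0 → g p lam0 d ≠ 0 := fun d hd => (hgpos d ((hn d).lt_of_ne' hd)).ne'
  constructor
  · convert hasDerivAt_Qsur_update p n lam0 lam0 b (hpos b).ne' using 1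
    rw [neg_add_eq_sub]
    congr 1
    refine sum_congr rfl fun d _ => ?_
    rw [div_right_comm, mul_div_cancel_right₀ _ (hpos b).ne', mul_div_assoc]
  · convert hasDerivAt_logLik_update p n lam0 b hg using 1
    rw [sum_sub_distrib, hpsum b, neg_add_eq_sub]

/-- Fisher's identity for PET: at λ = λ0 the partial derivatives of the
surrogate Q(·, λ0) and of the log-likelihood ℓ coincide, both equal to
`-1 + ∑ d, n d * p b d / g λ0 d`. -/
theorem fisher_identity {B D : Type*} [Fintype B] [Fintype D] [Nonempty B] [Nonempty D]
    (p : B → D → ℝ) (hp : ∀ b d, 0 ≤ p b d) (hpsum : ∀ b, ∑ d, p b d = 1)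
    (n : D → ℝ) (hn : ∀ d, 0 ≤ n d) [DecidableEq B]
    (lam0 : B → ℝ) (hlam0 : Admissible p n lam0) (b : B) :
    HasDerivAt (fun t : ℝ => Qsur p n (Function.update lam0 b t) lam0)
      (-1 + ∑ d, n d * p b d / g p lam0 d) (lam0 b) ∧
    HasDerivAt (fun t : ℝ => logLik p n (Function.update lam0 b t))
      (-1 + ∑ d, n d * p b d / g p lam0 d) (lam0 b) :=
  fisher_identity_general p hpsum n hn lam0 hlam0 b
end

section
/- (EM minorization inequality for the PET model.) For all admissible λ0 and λ, ℓ λ − ℓ λ0 ≥ Q λ λ0 − Q λ0 λ0. -/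
open scoped BigOperators

/-!
Projection conserves mass (`∑_d g λ d = ∑_b λ b`), so after cancelling the linear terms the
difference `ℓ λ - ℓ λ0 - (Q λ λ0 - Q λ0 λ0)` is a sum over detectors `d` of `n d` times
`log (g λ d / g λ0 d) - ∑_b w_b log (λ b / λ0 b)`, where `w_b = p b d * λ0 b / g λ0 d`
are the posterior weights of the pixels given `d`. Since `∑_b w_b (λ b / λ0 b) = g λ d / g λ0 d`,
each bracket is nonnegative by Jensen's inequality for the concave logarithm.
-/

open Finset Real

theorem sum_mul_log_le_log_sum_mul {ι : Type*} {s : Finset ι} {w x : ι → ℝ}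
    (hw : ∀ i ∈ s, 0 ≤ w i) (hw₁ : ∑ i ∈ s, w i = 1) (hx : ∀ i ∈ s, 0 < x i) :
    ∑ i ∈ s, w i * log (x i) ≤ log (∑ i ∈ s, w i * x i) := by
  simpa only [smul_eq_mul] using strictConcaveOn_log_Ioi.concaveOn.le_map_sum hw hw₁ hx

section

variable {B D : Type*} [Fintype B] {p : B → D → ℝ}

theorem sum_g_eq_sum [Fintype D] (hpsum : ∀ b, ∑ d, p b d = 1) (μ : B → ℝ) :
    ∑ d, g p μ d = ∑ b, μ b := by
  simp only [g]
  rw [sum_comm]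
  exact sum_congr rfl fun b _ => by rw [← sum_mul, hpsum, one_mul]

theorem logLik_sub_sub_Qsur_sub [Fintype D] (hpsum : ∀ b, ∑ d, p b d = 1) (n : D → ℝ)
    (lam lam0 : B → ℝ) :
    logLik p n lam - logLik p n lam0 - (Qsur p n lam lam0 - Qsur p n lam0 lam0) =
      ∑ d, n d * (log (g p lam d) - log (g p lam0 d) -
        ∑ b, p b d * lam0 b / g p lam0 d * (log (lam b * p b d) - log (lam0 b * p b d))) := by
  simp only [logLik, Qsur, sum_sub_distrib]
  rw [sum_g_eq_sum hpsum lam, sum_g_eq_sum hpsum lam0]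
  simp only [mul_sub, mul_sum, sum_sub_distrib]
  ring

theorem sum_posterior_mul_log_sub_le {lam lam0 : B → ℝ} {d : D} (hp : ∀ b, 0 ≤ p b d)
    (hlam : ∀ b, 0 < lam b) (hlam0 : ∀ b, 0 < lam0 b)
    (hg : 0 < g p lam d) (hg0 : 0 < g p lam0 d) :
    ∑ b, p b d * lam0 b / g p lam0 d * (log (lam b * p b d) - log (lam0 b * p b d)) ≤
      log (g p lam d) - log (g p lam0 d) := by
  -- where `p b d = 0` the weight vanishes, so the junk value `log 0 = 0` never matters
  have hlog_ratio : ∀ b, p b d * lam0 b / g p lam0 d * (log (lam b * p b d) -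
      log (lam0 b * p b d)) = p b d * lam0 b / g p lam0 d * log (lam b / lam0 b) := by
    intro b
    rcases (hp b).eq_or_lt with hpb | hpb
    · simp [← hpb]
    rw [log_mul (hlam b).ne' hpb.ne', log_mul (hlam0 b).ne' hpb.ne',
      log_div (hlam b).ne' (hlam0 b).ne']
    ring
  have hmean : ∑ b, p b d * lam0 b / g p lam0 d * (lam b / lam0 b) = g p lam d / g p lam0 d := by
    refine (sum_congr rfl fun b _ => ?_).trans (sum_div _ _ _).symm
    field_simp [(hlam0 b).ne']
  calc _ = ∑ b, p b d * lam0 b / g p lam0 d * log (lam b / lam0 b) :=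
        sum_congr rfl fun b _ => hlog_ratio b
    _ ≤ log (∑ b, p b d * lam0 b / g p lam0 d * (lam b / lam0 b)) :=
        sum_mul_log_le_log_sum_mul
          (fun b _ => div_nonneg (mul_nonneg (hp b) (hlam0 b).le) hg0.le)
          (by rw [← sum_div]; exact div_self hg0.ne')
          (fun b _ => div_pos (hlam b) (hlam0 b))
    _ = log (g p lam d) - log (g p lam0 d) := by rw [hmean, log_div hg.ne' hg0.ne']

end

theorem em_minorization_general {B D : Type*} [Fintype B] [Fintype D]
    (p : B → D → ℝ) (hp : ∀ b d, 0 ≤ p b d) (hpsum : ∀ b, ∑ d, p b d = 1)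
    (n : D → ℝ) (hn : ∀ d, 0 ≤ n d)
    (lam0 : B → ℝ) (hlam0 : Admissible p n lam0)
    (lam : B → ℝ) (hlam : Admissible p n lam) :
    logLik p n lam - logLik p n lam0 ≥ Qsur p n lam lam0 - Qsur p n lam0 lam0 := by
  obtain ⟨hpos0, hg0⟩ := hlam0
  obtain ⟨hpos, hg⟩ := hlam
  rw [ge_iff_le, ← sub_nonneg, logLik_sub_sub_Qsur_sub hpsum]
  refine sum_nonneg fun d _ => ?_
  rcases (hn d).eq_or_lt with hnd | hnd
  · simp [← hnd]
  exact mul_nonneg hnd.le <| sub_nonneg.2 <|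
    sum_posterior_mul_log_sub_le (hp · d) hpos hpos0 (hg d hnd) (hg0 d hnd)

/-- EM minorization: `ℓ λ − ℓ λ0 ≥ Q λ λ0 − Q λ0 λ0`. -/
theorem em_minorization {B D : Type*} [Fintype B] [Fintype D] [Nonempty B] [Nonempty D]
    (p : B → D → ℝ) (hp : ∀ b d, 0 ≤ p b d) (hpsum : ∀ b, ∑ d, p b d = 1)
    (n : D → ℝ) (hn : ∀ d, 0 ≤ n d)
    (lam0 : B → ℝ) (hlam0 : Admissible p n lam0)
    (lam : B → ℝ) (hlam : Admissible p n lam) :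
    logLik p n lam - logLik p n lam0 ≥ Qsur p n lam lam0 - Qsur p n lam0 lam0 :=
  em_minorization_general p hp hpsum n hn lam0 hlam0 lam hlam
end

section
/- Let λ0 be admissible and assume that for every b ∈ B there exists d ∈ D with n d * p b d > 0 (so that T λ0 b > 0 for all b). Then the EM update T λ0 maximizes the surrogate: for every admissible λ, Q λ λ0 ≤ Q (T λ0) λ0, with equality if and only if λ = T λ0. -/
open scoped BigOperators

/-! The surrogate separates over pixels: `Q λ λ0 = ∑ b, (T λ0 b * log (λ b) - λ b) + C` with `C`
independent of `λ`. Each summand `t log x - x` is uniquely maximized at `x = t`, by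
`log y ≤ y - 1` with equality only at `y = 1`. -/

open Finset Real

section MulLogSub

variable {t x : ℝ}

theorem mul_log_sub_le_mul_log_sub (ht : 0 < t) (hx : 0 < x) :
    t * log x - x ≤ t * log t - t := by
  have h := mul_le_mul_of_nonneg_left (log_le_sub_one_of_pos (div_pos hx ht)) ht.le
  rw [log_div hx.ne' ht.ne', mul_sub, mul_sub, mul_div_cancel₀ _ ht.ne'] at h
  linarith

theorem mul_log_sub_lt_mul_log_sub (ht : 0 < t) (hx : 0 < x) (hne : x ≠ t) :
    t * log x - x < t * log t - t := by
  have hne' : x / t ≠ 1 := fun h => hne ((div_eq_one_iff_eq ht.ne').mp h)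
  have h := mul_lt_mul_of_pos_left (log_lt_sub_one_of_pos (div_pos hx ht) hne') ht
  rw [log_div hx.ne' ht.ne', mul_sub, mul_sub, mul_div_cancel₀ _ ht.ne'] at h
  linarith

variable {ι : Type*} [Fintype ι] {t x : ι → ℝ}

theorem sum_mul_log_sub_le (ht : ∀ i, 0 < t i) (hx : ∀ i, 0 < x i) :
    ∑ i, (t i * log (x i) - x i) ≤ ∑ i, (t i * log (t i) - t i) :=
  sum_le_sum fun i _ => mul_log_sub_le_mul_log_sub (ht i) (hx i)

theorem sum_mul_log_sub_eq_iff (ht : ∀ i, 0 < t i) (hx : ∀ i, 0 < x i) :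
    ∑ i, (t i * log (x i) - x i) = ∑ i, (t i * log (t i) - t i) ↔ x = t := by
  refine ⟨fun heq => ?_, fun h => h ▸ rfl⟩
  by_contra hne
  obtain ⟨i, hi⟩ := Function.ne_iff.mp hne
  exact heq.not_lt (sum_lt_sum (fun i _ => mul_log_sub_le_mul_log_sub (ht i) (hx i))
    ⟨i, mem_univ i, mul_log_sub_lt_mul_log_sub (ht i) (hx i) hi⟩)

end MulLogSub

section EM

variable {B D : Type*} [Fintype B] {p : B → D → ℝ} {n : D → ℝ} {lam0 lam : B → ℝ}

theorem g_nonneg (hp : ∀ b d, 0 ≤ p b d) (hlam : ∀ b, 0 ≤ lam b) (d : D) : 0 ≤ g p lam d :=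
  sum_nonneg fun b _ => mul_nonneg (hp b d) (hlam b)

variable [Fintype D]

theorem emT_pos (hp : ∀ b d, 0 ≤ p b d) (hn : ∀ d, 0 ≤ n d) (hlam0 : Admissible p n lam0)
    (hb : ∀ b, ∃ d, n d * p b d > 0) (b : B) : 0 < emT p n lam0 b := by
  have hg := g_nonneg hp fun b => (hlam0.1 b).le
  obtain ⟨d, hd⟩ := hb b
  have hnd : 0 < n d := pos_of_mul_pos_left hd (hp b d)
  refine mul_pos (hlam0.1 b) (sum_pos' (fun d _ => ?_) ⟨d, mem_univ d, ?_⟩)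
  · exact div_nonneg (mul_nonneg (hn d) (hp b d)) (hg d)
  · exact div_pos hd (hlam0.2 d hnd)

theorem Qsur_eq_sum_add (hp : ∀ b d, 0 ≤ p b d) (hlam : ∀ b, 0 < lam b) :
    Qsur p n lam lam0 = ∑ b, (emT p n lam0 b * log (lam b) - lam b) +
      ∑ d, n d * ∑ b, (p b d * lam0 b / g p lam0 d) * log (p b d) := by
  have hlog : ∀ b d, (p b d * lam0 b / g p lam0 d) * log (lam b * p b d) =
      (p b d * lam0 b / g p lam0 d) * log (lam b) +
        (p b d * lam0 b / g p lam0 d) * log (p b d) := by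
    intro b d
    -- where `p b d = 0` the weight vanishes, so the convention `log 0 = 0` never matters
    rcases (hp b d).eq_or_lt with h | h
    · simp [← h]
    · rw [log_mul (hlam b).ne' h.ne', mul_add]
  have hswap : ∑ d, n d * ∑ b, (p b d * lam0 b / g p lam0 d) * log (lam b) =
      ∑ b, emT p n lam0 b * log (lam b) := by
    simp only [emT, mul_sum, sum_mul]
    rw [sum_comm]
    exact sum_congr rfl fun b _ => sum_congr rfl fun d _ => by ring
  simp only [Qsur, hlog, sum_add_distrib, mul_add, hswap, sum_sub_distrib]
  ring

end EM

theorem emT_maximizes_surrogate_general {B D : Type*} [Fintype B] [Fintype D]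
    (p : B → D → ℝ) (hp : ∀ b d, 0 ≤ p b d)
    (n : D → ℝ) (hn : ∀ d, 0 ≤ n d)
    (lam0 : B → ℝ) (hlam0 : Admissible p n lam0)
    (hb : ∀ b, ∃ d, n d * p b d > 0) :
    ∀ lam : B → ℝ, Admissible p n lam →
      Qsur p n lam lam0 ≤ Qsur p n (emT p n lam0) lam0 ∧
      (Qsur p n lam lam0 = Qsur p n (emT p n lam0) lam0 ↔ lam = emT p n lam0) := by
  intro lam hlam
  have hT := emT_pos hp hn hlam0 hb
  rw [Qsur_eq_sum_add hp hlam.1, Qsur_eq_sum_add hp hT, add_le_add_iff_right, add_left_inj]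
  exact ⟨sum_mul_log_sub_le hT hlam.1, sum_mul_log_sub_eq_iff hT hlam.1⟩

/-- the EM update T λ0 maximizes the surrogate Q(·, λ0) over admissible λ,
with equality iff λ = T λ0. -/
theorem emT_maximizes_surrogate {B D : Type*} [Fintype B] [Fintype D] [Nonempty B] [Nonempty D]
    (p : B → D → ℝ) (hp : ∀ b d, 0 ≤ p b d) (hpsum : ∀ b, ∑ d, p b d = 1)
    (n : D → ℝ) (hn : ∀ d, 0 ≤ n d)
    (lam0 : B → ℝ) (hlam0 : Admissible p n lam0)
    (hb : ∀ b, ∃ d, n d * p b d > 0) :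
    ∀ lam : B → ℝ, Admissible p n lam →
      Qsur p n lam lam0 ≤ Qsur p n (emT p n lam0) lam0 ∧
      (Qsur p n lam lam0 = Qsur p n (emT p n lam0) lam0 ↔ lam = emT p n lam0) :=
  emT_maximizes_surrogate_general p hp n hn lam0 hlam0 hb
end

section
/- Assume that for every d ∈ D with n d > 0 there exists b ∈ B with p b d > 0. Let λ̂ be admissible and satisfy the MLE stationarity condition ∑_{d ∈ D} n d * p b d / g λ̂ d = 1 for every b ∈ B. Then λ̂ is a global maximizer of the incomplete-data log-likelihood over the positive orthant: ℓ λ̂ ≥ ℓ λ for every λ with λ b > 0 for all b. -/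
open scoped BigOperators

/-!
On each detector `d` the map `x ↦ n d * log x - x` is concave, so it lies below its tangent
line at `g lamhat d`. Summing over `d`, `logLik p n lam` is bounded by `logLik p n lamhat` plus the
linear term `∑ d, (n d / g lamhat d - 1) * (g lam d - g lamhat d)`. Moving the sum onto the
pixels, the coefficient of `lam b - lamhat b` is `∑ d, n d * p b d / g lamhat d - ∑ d, p b d`,
which is `1 - 1 = 0` by stationarity and the normalisation of `p`.
-/

open Finset

lemma mul_log_sub_le_tangent {n x y : ℝ} (hn : 0 ≤ n) (hx : 0 < n → 0 < x)
    (hy : 0 < n → 0 < y) :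
    n * Real.log x - x ≤ n * Real.log y - y + (n / y - 1) * (x - y) := by
  rcases hn.eq_or_lt with rfl | hn
  · simp
  specialize hx hn
  specialize hy hn
  have hlog : Real.log x - Real.log y ≤ x / y - 1 := by
    rw [← Real.log_div hx.ne' hy.ne']
    exact Real.log_le_sub_one_of_pos (div_pos hx hy)
  have hlin : (n / y - 1) * (x - y) = n * (x / y - 1) - (x - y) := by
    field_simp
  linarith [mul_le_mul_of_nonneg_left hlog hn.le]

section Projection

variable {B D : Type*} [Fintype B]

lemma g_pos {p : B → D → ℝ} (hp : ∀ b d, 0 ≤ p b d) {lam : B → ℝ} (hlam : ∀ b, 0 < lam b)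
    {d : D} (hd : ∃ b, 0 < p b d) : 0 < g p lam d := by
  obtain ⟨b, hb⟩ := hd
  exact sum_pos' (fun b _ => mul_nonneg (hp b d) (hlam b).le) ⟨b, mem_univ b, mul_pos hb (hlam b)⟩

variable [Fintype D]

lemma sum_mul_g (p : B → D → ℝ) (w : D → ℝ) (lam : B → ℝ) :
    ∑ d, w d * g p lam d = ∑ b, lam b * ∑ d, w d * p b d := by
  simp only [g, mul_sum]
  rw [sum_comm]
  exact sum_congr rfl fun b _ => sum_congr rfl fun d _ => by ring

lemma sum_mul_g_eq_zero {p : B → D → ℝ} {w : D → ℝ} (hw : ∀ b, ∑ d, w d * p b d = 0)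
    (lam : B → ℝ) : ∑ d, w d * g p lam d = 0 := by
  simp [sum_mul_g, hw]

end Projection

theorem stationary_is_global_max_general {B D : Type*} [Fintype B] [Fintype D]
    (p : B → D → ℝ) (hp : ∀ b d, 0 ≤ p b d) (hpsum : ∀ b, ∑ d, p b d = 1)
    (n : D → ℝ) (hn : ∀ d, 0 ≤ n d)
    (hpos : ∀ d, n d > 0 → ∃ b, p b d > 0)
    (lamhat : B → ℝ) (hlamhat : Admissible p n lamhat)
    (hstat : ∀ b, ∑ d, n d * p b d / g p lamhat d = 1) :
    ∀ lam : B → ℝ, (∀ b, lam b > 0) → logLik p n lamhat ≥ logLik p n lam  := by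
  intro lam hlam
  set w : D → ℝ := fun d => n d / g p lamhat d - 1
  have hw : ∀ b, ∑ d, w d * p b d = 0 := fun b => by
    calc ∑ d, w d * p b d = ∑ d, n d * p b d / g p lamhat d - ∑ d, p b d := by
          rw [← sum_sub_distrib]
          exact sum_congr rfl fun d _ => by ring
      _ = 0 := by rw [hstat b, hpsum b, sub_self]
  have htangent : ∀ d, n d * Real.log (g p lam d) - g p lam d ≤
      n d * Real.log (g p lamhat d) - g p lamhat d + w d * (g p lam d - g p lamhat d) :=
    fun d => mul_log_sub_le_tangent (hn d) (fun h => g_pos hp hlam (hpos d h)) (hlamhat.2 d)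
  calc logLik p n lam
      ≤ ∑ d, (n d * Real.log (g p lamhat d) - g p lamhat d
          + w d * (g p lam d - g p lamhat d)) := sum_le_sum fun d _ => htangent d
    _ = logLik p n lamhat := by
      simp only [logLik, mul_sub, sum_add_distrib, sum_sub_distrib, sum_mul_g_eq_zero hw,
        sub_self, add_zero]

/-- an admissible stationary point is a global maximizer of ℓ
over the positive orthant. -/
theorem stationary_is_global_max {B D : Type*} [Fintype B] [Fintype D] [Nonempty B] [Nonempty D]
    (p : B → D → ℝ) (hp : ∀ b d, 0 ≤ p b d) (hpsum : ∀ b, ∑ d, p b d = 1)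
    (n : D → ℝ) (hn : ∀ d, 0 ≤ n d)
    (hpos : ∀ d, n d > 0 → ∃ b, p b d > 0)
    (lamhat : B → ℝ) (hlamhat : Admissible p n lamhat)
    (hstat : ∀ b, ∑ d, n d * p b d / g p lamhat d = 1) :
    ∀ lam : B → ℝ, (∀ b, lam b > 0) → logLik p n lamhat ≥ logLik p n lam :=
  stationary_is_global_max_general p hp hpsum n hn hpos lamhat hlamhat hstat
end

section
/- (Bilinear form of Theorem 1.) Let λ be admissible. The second Fréchet derivative of the incomplete-data log-likelihood ℓ at λ exists and, applied to directions v, w : B → ℝ, equals −∑_{d ∈ D} (n d / (g λ d)^2) * (∑_{b ∈ B} p b d * v b) * (∑_{b ∈ B} p b d * w b). -/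
open scoped BigOperators

/-!
Each summand of `ℓ` is `φ_d ∘ L_d` with `φ_d t = n_d * log t - t` and `L_d μ = g μ d` a linear
form, so its second derivative in directions `v, w` is `φ_d''(L_d λ) * L_d v * L_d w`, and
`φ_d'' t = -n_d / t ^ 2`. Admissibility is exactly what makes every `φ_d` smooth at `L_d λ`:
either `g λ d ≠ 0`, or `n_d = 0` and `φ_d` is linear.
-/

open Filter Topology

section CompContinuousLinearMap

variable {𝕜 : Type*} [NontriviallyNormedField 𝕜]
  {E F G : Type*} [NormedAddCommGroup E] [NormedSpace 𝕜 E] [NormedAddCommGroup F]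
  [NormedSpace 𝕜 F] [NormedAddCommGroup G] [NormedSpace 𝕜 G]

theorem ContinuousLinearMap.iteratedFDeriv_comp_right_of_contDiffAt (L : G →L[𝕜] E) {f : E → F}
    {x : G} {i : ℕ} (hf : ContDiffAt 𝕜 i f (L x)) :
    iteratedFDeriv 𝕜 i (f ∘ L) x =
      (iteratedFDeriv 𝕜 i f (L x)).compContinuousLinearMap fun _ => L := by
  obtain ⟨s, hfs, hs_open, hxs⟩ := eventually_nhds_iff.1 (hf.eventually (by simp))
  have hpre_open : IsOpen (L ⁻¹' s) := hs_open.preimage L.continuous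
  rw [← iteratedFDerivWithin_of_isOpen i hpre_open hxs,
    ← iteratedFDerivWithin_of_isOpen i hs_open hxs]
  exact L.iteratedFDerivWithin_comp_right (fun y hy => (hfs y hy).contDiffWithinAt)
    hs_open.uniqueDiffOn hpre_open.uniqueDiffOn hxs le_rfl

theorem ContinuousLinearMap.iteratedFDeriv_comp_apply_eq_iteratedDeriv (ℓ : E →L[𝕜] 𝕜)
    {f : 𝕜 → F} {x : E} {i : ℕ} (hf : ContDiffAt 𝕜 i f (ℓ x)) (m : Fin i → E) :
    iteratedFDeriv 𝕜 i (f ∘ ℓ) x m = (∏ k, ℓ (m k)) • iteratedDeriv i f (ℓ x) := by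
  rw [ℓ.iteratedFDeriv_comp_right_of_contDiffAt hf,
    ContinuousMultilinearMap.compContinuousLinearMap_apply,
    iteratedFDeriv_apply_eq_iteratedDeriv_mul_prod]

end CompContinuousLinearMap

namespace Real

theorem contDiffAt_const_mul_log_sub_id {c t : ℝ} (h : t ≠ 0 ∨ c = 0) {k : WithTop ℕ∞} :
    ContDiffAt ℝ k (fun s => c * log s - s) t := by
  rcases h with ht | rfl
  · exact (contDiffAt_const.mul (contDiffAt_log.2 ht)).sub contDiffAt_id
  · simpa using contDiffAt_id.neg

theorem iteratedDeriv_two_const_mul_log_sub_id {c t : ℝ} (h : t ≠ 0 ∨ c = 0) :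
    iteratedDeriv 2 (fun s => c * log s - s) t = -c / t ^ 2 := by
  rw [iteratedDeriv_succ, iteratedDeriv_one]
  rcases h with ht | rfl
  · have hderiv : deriv (fun s => c * log s - s) =ᶠ[𝓝 t] fun s => c * s⁻¹ - 1 := by
      filter_upwards [isOpen_ne.mem_nhds ht] with s hs
      exact (((hasDerivAt_log hs).const_mul c).sub (hasDerivAt_id s)).deriv.trans (by simp)
    rw [hderiv.deriv_eq]
    refine (((hasDerivAt_inv ht).const_mul c).sub_const 1).deriv.trans ?_
    field_simp
  · simp

end Real

section ForwardProjection

variable {B D : Type*} [Fintype B]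

noncomputable def gCLM (p : B → D → ℝ) (d : D) : (B → ℝ) →L[ℝ] ℝ :=
  ∑ b, p b d • ContinuousLinearMap.proj b

@[simp]
theorem gCLM_apply (p : B → D → ℝ) (d : D) (μ : B → ℝ) : gCLM p d μ = g p μ d := by
  simp [gCLM, g]

theorem logLik_eq_sum_comp [Fintype D] (p : B → D → ℝ) (n : D → ℝ) :
    logLik p n = fun μ => ∑ d, ((fun t => n d * Real.log t - t) ∘ gCLM p d) μ := by
  ext μ
  simp [logLik]

theorem Admissible.g_ne_zero_or_eq_zero [Fintype D] {p : B → D → ℝ} {n : D → ℝ} {lam : B → ℝ}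
    (hlam : Admissible p n lam) (hn : ∀ d, 0 ≤ n d) (d : D) : g p lam d ≠ 0 ∨ n d = 0 := by
  rcases (hn d).lt_or_eq with hd | hd
  · exact .inl (hlam.2 d hd).ne'
  · exact .inr hd.symm

end ForwardProjection

theorem logLik_second_frechet_general {B D : Type*} [Fintype B] [Fintype D]
    (p : B → D → ℝ)
    (n : D → ℝ) (hn : ∀ d, 0 ≤ n d)
    (lam : B → ℝ) (hlam : Admissible p n lam) :
    ContDiffAt ℝ 2 (logLik p n) lam ∧
    ∀ v w : B → ℝ, iteratedFDeriv ℝ 2 (logLik p n) lam ![v, w] =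
      -∑ d, (n d / (g p lam d) ^ 2) * (∑ b, p b d * v b) * (∑ b, p b d * w b) := by
  have hsmooth : ∀ d, ContDiffAt ℝ 2 (fun t => n d * Real.log t - t) (gCLM p d lam) := fun d =>
    Real.contDiffAt_const_mul_log_sub_id (by simpa using hlam.g_ne_zero_or_eq_zero hn d)
  have hterm d := (hsmooth d).comp lam (gCLM p d).contDiff.contDiffAt
  rw [logLik_eq_sum_comp]
  refine ⟨ContDiffAt.sum fun d _ => hterm d, fun v w => ?_⟩
  rw [iteratedFDeriv_fun_sum_apply fun d _ => hterm d, sum_apply, ← Finset.sum_neg_distrib]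
  refine Finset.sum_congr rfl fun d _ => ?_
  rw [(gCLM p d).iteratedFDeriv_comp_apply_eq_iteratedDeriv (hsmooth d), gCLM_apply,
    Real.iteratedDeriv_two_const_mul_log_sub_id (hlam.g_ne_zero_or_eq_zero hn d)]
  simp only [Fin.prod_univ_two, Matrix.cons_val_zero, Matrix.cons_val_one, gCLM_apply, g,
    smul_eq_mul]
  ring

/-- bilinear form of Theorem 1: ℓ is twice differentiable at admissible λ and
its second Fréchet derivative applied to directions v, w equals
`-∑ d, (n d / (g λ d)^2) * (∑ b, p b d * v b) * (∑ b, p b d * w b)`. -/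
theorem logLik_second_frechet {B D : Type*} [Fintype B] [Fintype D] [Nonempty B] [Nonempty D]
    (p : B → D → ℝ) (hp : ∀ b d, 0 ≤ p b d) (hpsum : ∀ b, ∑ d, p b d = 1)
    (n : D → ℝ) (hn : ∀ d, 0 ≤ n d)
    (lam : B → ℝ) (hlam : Admissible p n lam) :
    ContDiffAt ℝ 2 (logLik p n) lam ∧
    ∀ v w : B → ℝ, iteratedFDeriv ℝ 2 (logLik p n) lam ![v, w] =
      -∑ d, (n d / (g p lam d) ^ 2) * (∑ b, p b d * v b) * (∑ b, p b d * w b) :=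
  logLik_second_frechet_general p n hn lam hlam
end
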